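/- Let T be a rooted directed tree with root r, and let T' be the rooted directed tree obtained from T by adding a new vertex r' and the directed edge (r, r'), with r' as the new root. Then for every positive integer k, vrev(T) ≤ k if and only if rev(T') ≤ k + 1. -/

import Mathlib

/-- A system for pebbling: a finite directed tree given by a root and a parent
function (edges are directed from each non-root vertex to its parent, i.e.
toward the root). -/
structure PebSys (V : Type) where
  root : V
  parent : V → V

/-- `T` is a genuine rooted directed tree: the root is a fixed point of the
parent map and every vertex reaches the root by iterating the parent map. -/
def IsRDTree {V : Type} [Fintype V] (T : PebSys V) : Prop :=
  T.parent T.root = T.root ∧ ∀ v : V, ∃ k : ℕ, T.parent^[k] v = T.root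

/-- One legal move of the reversible pebble game, from configuration `P` to
configuration `Q`: exactly one vertex `v` is pebbled or unpebbled, and all
in-neighbours of `v` (vertices `u ≠ v` with `parent u = v`) carry pebbles
in `P`. -/
def PebStep {V : Type} [DecidableEq V] (T : PebSys V) (P Q : Finset V) : Prop :=
  ∃ v : V, ((v ∉ P ∧ Q = insert v P) ∨ (v ∉ Q ∧ P = insert v Q)) ∧
    ∀ u : V, u ≠ v → T.parent u = v → u ∈ P

/-- A persistent reversible pebbling: starts with no pebbles, ends with a
pebble exactly on the root, consecutive configurations are legal moves. -/
def IsPebbling {V : Type} [DecidableEq V] (T : PebSys V) (L : List (Finset V)) : Prop :=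
  L.head? = some ∅ ∧ L.getLast? = some {T.root} ∧ L.Chain' (PebStep T)

/-- A visiting reversible pebbling: starts and ends with no pebbles, and the
root carries a pebble at some point. -/
def IsVisPebbling {V : Type} [DecidableEq V] (T : PebSys V) (L : List (Finset V)) : Prop :=
  L.head? = some ∅ ∧ L.getLast? = some ∅ ∧ (∃ P ∈ L, T.root ∈ P) ∧ L.Chain' (PebStep T)

/-- The space of a pebbling: the maximum number of pebbles in any configuration. -/
def pebSpace {V : Type} (L : List (Finset V)) : ℕ := (L.map Finset.card).foldr max 0

/-- The persistent reversible pebbling number `rev`. -/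
noncomputable def revNum {V : Type} [DecidableEq V] (T : PebSys V) : ℕ :=
  sInf {k | ∃ L : List (Finset V), IsPebbling T L ∧ pebSpace L ≤ k}

/-- The visiting reversible pebbling number `vrev`. -/
noncomputable def vrevNum {V : Type} [DecidableEq V] (T : PebSys V) : ℕ :=
  sInf {k | ∃ L : List (Finset V), IsVisPebbling T L ∧ pebSpace L ≤ k}

/-!
Given a visiting pebbling of `T`, run it up to a configuration containing the root `r`, pebble
the new root `r' = none` (its only in-neighbour is `r`), and undo the first part while `r'`
stays: this is a persistent pebbling of `T'` with one pebble more. Conversely, in a persistent pebbling of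
`T'` consider the final stretch during which `r'` stays pebbled. It starts right after `r'` was
pebbled, hence with `r` pebbled, and forgetting `r'` turns it into a sequence of moves on `T`
with one pebble less, ending empty; running it backwards and forwards again visits `r`.

So the budgets admitting a visiting pebbling of `T` are exactly the predecessors of those
admitting a persistent pebbling of `T'`; this also covers the case where neither exists and both
infima are the junk value `0`.
-/

open Finset

theorem List.IsChain.reverse_of_symm {α : Type*} {R : α → α → Prop} [Std.Symm R]
    {l : List α} (h : l.IsChain R) : l.reverse.IsChain R :=
  List.isChain_reverse.2 (h.imp fun _ _ => Std.Symm.symm _ _)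

theorem List.IsChain.reverse_append_tail {α : Type*} {R : α → α → Prop} [Std.Symm R] {a : α}
    {l : List α} (h : (a :: l).IsChain R) : ((a :: l).reverse ++ l).IsChain R := by
  have h' := h.reverse_of_symm
  rw [List.reverse_cons] at h' ⊢
  exact h'.append_overlap h (List.cons_ne_nil a [])

theorem List.head?_reverse_append_tail {α : Type*} (a : α) (l : List α) :
    ((a :: l).reverse ++ l).head? = (a :: l).getLast? := by
  simp [List.getLast?_cons]

theorem List.getLast?_reverse_append_tail {α : Type*} (a : α) (l : List α) :
    ((a :: l).reverse ++ l).getLast? = (a :: l).getLast? := by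
  cases l with
  | nil => simp
  | cons b l =>
    rw [List.getLast?_append_of_ne_nil _ (List.cons_ne_nil b l), List.getLast?_cons_cons]

theorem List.exists_maximal_suffix_forall {α : Type*} {p : α → Prop} :
    ∀ {l : List α} {b : α}, l.getLast? = some b → p b → (∃ a ∈ l, ¬ p a) →
      ∃ l₁ a c l₂, l = l₁ ++ a :: c :: l₂ ∧ ¬ p a ∧ ∀ z ∈ c :: l₂, p z
  | [], _, _, _, h => by simp at h
  | [a], b, hb, hpb, h => by simp_all
  | a :: c :: l₂, b, hb, hpb, h => by
    by_cases ht : ∀ z ∈ c :: l₂, p z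
    · refine ⟨[], a, c, l₂, rfl, fun hpa => ?_, ht⟩
      obtain ⟨z, hz, hpz⟩ := h
      rcases List.mem_cons.1 hz with rfl | hz
      · exact hpz hpa
      · exact hpz (ht z hz)
    · push Not at ht
      obtain ⟨l₁, a', c', l₂', heq, hpa, hall⟩ :=
        exists_maximal_suffix_forall (l := c :: l₂) (by simpa using hb) hpb ht
      exact ⟨a :: l₁, a', c', l₂', by rw [heq]; rfl, hpa, hall⟩

theorem Nat.sInf_le_iff_sInf_le_succ {A B : Set ℕ} (hAB : ∀ m, m ∈ A ↔ m + 1 ∈ B)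
    (hB : 0 ∉ B) (k : ℕ) : sInf A ≤ k ↔ sInf B ≤ k + 1 := by
  rcases A.eq_empty_or_nonempty with hA | hA
  · have hB' : B = ∅ := by
      refine Set.eq_empty_of_forall_notMem fun m hm => ?_
      cases m with
      | zero => exact hB hm
      | succ m => simpa [hA] using (hAB m).2 hm
    simp [hA, hB']
  · constructor
    · intro h
      exact (Nat.sInf_le ((hAB _).1 (Nat.sInf_mem hA))).trans (by omega)
    · intro h
      obtain ⟨a, ha⟩ := hA
      have hmem := Nat.sInf_mem ⟨a + 1, (hAB a).1 ha⟩
      obtain ⟨m, hm⟩ := Nat.exists_eq_succ_of_ne_zero (ne_of_mem_of_not_mem hmem hB)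
      rw [hm] at hmem h
      exact (Nat.sInf_le ((hAB m).2 hmem)).trans (by omega)

theorem pebSpace_le_iff {V : Type} {L : List (Finset V)} {k : ℕ} :
    pebSpace L ≤ k ↔ ∀ Q ∈ L, Q.card ≤ k := by
  induction L with
  | nil => simp [pebSpace]
  | cons Q L ih => simp [pebSpace, ← ih]

theorem card_le_pebSpace {V : Type} {L : List (Finset V)} {Q : Finset V} (hQ : Q ∈ L) :
    Q.card ≤ pebSpace L :=
  pebSpace_le_iff.1 le_rfl Q hQ

theorem IsPebbling.one_le_pebSpace {V : Type} [DecidableEq V] {T : PebSys V}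
    {L : List (Finset V)} (hL : IsPebbling T L) : 1 ≤ pebSpace L :=
  card_le_pebSpace (List.mem_of_getLast? hL.2.1)

namespace PebStep

variable {V : Type} [DecidableEq V] {T : PebSys V} {P Q : Finset V}

theorem symm (h : PebStep T P Q) : PebStep T Q P := by
  obtain ⟨v, hv, hchildren⟩ := h
  refine ⟨v, hv.symm, fun u hu hpu => ?_⟩
  rcases hv with ⟨-, rfl⟩ | ⟨-, rfl⟩
  · exact mem_insert_of_mem (hchildren u hu hpu)
  · exact mem_of_mem_insert_of_ne (hchildren u hu hpu) hu

instance : Std.Symm (PebStep T) := ⟨fun _ _ => symm⟩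

theorem eq_insert_and_children_mem {v : V} (h : PebStep T P Q) (hP : v ∉ P) (hQ : v ∈ Q) :
    Q = insert v P ∧ ∀ u, u ≠ v → T.parent u = v → u ∈ P := by
  obtain ⟨w, hw, hchildren⟩ := h
  rcases hw with ⟨-, rfl⟩ | ⟨-, rfl⟩
  · obtain rfl : v = w := by simpa [hP] using hQ
    exact ⟨rfl, hchildren⟩
  · exact absurd (mem_insert_of_mem hQ) hP

theorem insert_of_notMem {w : V} (h : PebStep T P Q) (hP : w ∉ P) (hQ : w ∉ Q) :
    PebStep T (insert w P) (insert w Q) := by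
  obtain ⟨v, hv, hchildren⟩ := h
  refine ⟨v, ?_, fun u hu hpu => mem_insert_of_mem (hchildren u hu hpu)⟩
  rcases hv with ⟨hvP, rfl⟩ | ⟨hvQ, rfl⟩
  · exact Or.inl ⟨by aesop, Finset.insert_comm _ _ _⟩
  · exact Or.inr ⟨by aesop, Finset.insert_comm _ _ _⟩

theorem of_insert {w : V} (hw : T.parent w = w) (hP : w ∉ P) (hQ : w ∉ Q)
    (h : PebStep T (insert w P) (insert w Q)) : PebStep T P Q := by
  obtain ⟨v, hv, hchildren⟩ := h
  have hvw : v ≠ w := by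
    rintro rfl
    rcases hv with ⟨h, -⟩ | ⟨h, -⟩ <;> exact h (mem_insert_self v _)
  refine ⟨v, ?_, fun u hu hpu => mem_of_mem_insert_of_ne (hchildren u hu hpu) ?_⟩
  · rcases hv with ⟨hvP, hPQ⟩ | ⟨hvQ, hQP⟩
    · refine Or.inl ⟨fun h => hvP (mem_insert_of_mem h), ?_⟩
      rw [← erase_insert hQ, hPQ, insert_comm, erase_insert (by simp [hvw.symm, hP])]
    · refine Or.inr ⟨fun h => hvQ (mem_insert_of_mem h), ?_⟩
      rw [← erase_insert hP, hQP, insert_comm, erase_insert (by simp [hvw.symm, hQ])]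
  · rintro rfl
    exact hvw (hpu ▸ hw)

variable {W : Type} [DecidableEq W] {T' : PebSys W} {f : V ↪ W}

theorem map (hf : ∀ x v, x ≠ f v → T'.parent x = f v → ∃ u, f u = x ∧ T.parent u = v)
    (h : PebStep T P Q) : PebStep T' (P.map f) (Q.map f) := by
  obtain ⟨v, hv, hchildren⟩ := h
  refine ⟨f v, ?_, fun x hx hpx => ?_⟩
  · rcases hv with ⟨hvP, rfl⟩ | ⟨hvQ, rfl⟩
    · exact Or.inl ⟨by simpa using hvP, map_insert f v P⟩
    · exact Or.inr ⟨by simpa using hvQ, map_insert f v Q⟩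
  · obtain ⟨u, rfl, hpu⟩ := hf x v hx hpx
    exact mem_map_of_mem f (hchildren u (fun h => hx (h ▸ rfl)) hpu)

theorem of_map (hf : ∀ u v, u ≠ v → T.parent u = v → T'.parent (f u) = f v)
    (h : PebStep T' (P.map f) (Q.map f)) : PebStep T P Q := by
  obtain ⟨x, hx, hchildren⟩ := h
  obtain ⟨v, rfl⟩ : ∃ v, f v = x := by
    rcases hx with ⟨-, hQP⟩ | ⟨-, hPQ⟩
    · obtain ⟨v, -, hv⟩ := mem_map.1 (hQP ▸ mem_insert_self x _); exact ⟨v, hv⟩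
    · obtain ⟨v, -, hv⟩ := mem_map.1 (hPQ ▸ mem_insert_self x _); exact ⟨v, hv⟩
  refine ⟨v, ?_, fun u hu hpu =>
    (mem_map' f).1 (hchildren (f u) (f.injective.ne hu) (hf u v hu hpu))⟩
  rcases hx with ⟨hvP, hQP⟩ | ⟨hvQ, hPQ⟩
  · exact Or.inl ⟨by simpa using hvP, by rwa [← map_insert, map_inj] at hQP⟩
  · exact Or.inr ⟨by simpa using hvQ, by rwa [← map_insert, map_inj] at hPQ⟩

end PebStep

theorem Finset.insertNone_eq_insert {α : Type*} [DecidableEq α] (s : Finset α) :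
    insertNone s = insert none (s.map .some) := by
  ext (_ | x) <;> simp

structure PebSys.IsRootExtension {V : Type} [DecidableEq V] (T' : PebSys (Option V))
    (T : PebSys V) : Prop where
  root_eq : T'.root = none
  parent_none : T'.parent none = none
  parent_some : ∀ v, T'.parent (some v) = if v = T.root then none else some (T.parent v)

namespace PebSys.IsRootExtension

variable {V : Type} [DecidableEq V] {T : PebSys V} {T' : PebSys (Option V)} {P Q : Finset V}

theorem pebStep_map_some (hT' : T'.IsRootExtension T) (h : PebStep T P Q) :
    PebStep T' (P.map .some) (Q.map .some) := by
  refine h.map fun x v hx hpx => ?_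
  rcases x with _ | u
  · simp [hT'.parent_none] at hpx
  · refine ⟨u, rfl, ?_⟩
    rw [hT'.parent_some] at hpx
    split_ifs at hpx
    · simp at hpx
    · exact Option.some.inj hpx

theorem pebStep_insertNone (hT' : T'.IsRootExtension T) (h : PebStep T P Q) :
    PebStep T' (insertNone P) (insertNone Q) := by
  rw [insertNone_eq_insert, insertNone_eq_insert]
  exact (hT'.pebStep_map_some h).insert_of_notMem (by simp) (by simp)

theorem pebStep_of_insertNone (hT' : T'.IsRootExtension T) (hfix : T.parent T.root = T.root)
    (h : PebStep T' (insertNone P) (insertNone Q)) : PebStep T P Q := by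
  rw [insertNone_eq_insert, insertNone_eq_insert] at h
  refine (h.of_insert hT'.parent_none (by simp) (by simp)).of_map fun u v huv hpu => ?_
  have hu : u ≠ T.root := by
    rintro rfl
    exact huv (hfix.symm.trans hpu)
  simp [hT'.parent_some, hu, hpu]

theorem pebStep_pebble_none (hT' : T'.IsRootExtension T) (hP : T.root ∈ P) :
    PebStep T' (P.map .some) (insertNone P) := by
  refine ⟨none, Or.inl ⟨by simp, insertNone_eq_insert P⟩, fun x hx hpx => ?_⟩
  rcases x with _ | u
  · exact absurd rfl hx
  · rw [hT'.parent_some] at hpx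
    split_ifs at hpx with hu
    simpa [hu] using hP

theorem root_mem_eraseNone (hT' : T'.IsRootExtension T) {P Q : Finset (Option V)}
    (h : PebStep T' P Q) (hP : none ∉ P) (hQ : none ∈ Q) : T.root ∈ eraseNone Q := by
  obtain ⟨rfl, hchildren⟩ := h.eq_insert_and_children_mem hP hQ
  simpa using hchildren (some T.root) (by simp) (by simp [hT'.parent_some])

theorem isChain_map_eraseNone (hT' : T'.IsRootExtension T) (hfix : T.parent T.root = T.root)
    {l : List (Finset (Option V))} (hl : ∀ Q ∈ l, none ∈ Q) (h : l.IsChain (PebStep T')) :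
    (l.map eraseNone).IsChain (PebStep T) := by
  have hl' : (l.map eraseNone).map insertNone = l := by
    rw [List.map_map]
    refine (List.map_congr_left fun Q hQ => ?_).trans l.map_id
    simp [insertNone_eraseNone, hl Q hQ]
  rw [← hl', List.isChain_map] at h
  exact h.imp fun _ _ => hT'.pebStep_of_insertNone hfix

theorem exists_isPebbling_of_isVisPebbling (hT' : T'.IsRootExtension T)
    {L : List (Finset V)} {k : ℕ} (hL : IsVisPebbling T L) (hk : pebSpace L ≤ k) :
    ∃ L' : List (Finset (Option V)), IsPebbling T' L' ∧ pebSpace L' ≤ k + 1 := by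
  obtain ⟨hhead, -, ⟨P, hPL, hrootP⟩, hchain⟩ := hL
  obtain ⟨s, t, rfl⟩ := List.mem_iff_append.1 hPL
  set Y := s ++ [P]
  have hYne : Y ≠ [] := by simp [Y]
  have hYL : Y <+: s ++ P :: t := ⟨t, by simp [Y]⟩
  have hYhead : Y.head? = some ∅ := by
    rwa [show s ++ P :: t = Y ++ t by simp [Y], List.head?_append_of_ne_nil _ hYne] at hhead
  have hY : Y.IsChain (PebStep T) := hchain.prefix hYL
  refine ⟨Y.map (map .some) ++ Y.reverse.map insertNone, ⟨?_, ?_, ?_⟩, ?_⟩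
  · rw [List.head?_append_of_ne_nil _ (by simpa using hYne), List.head?_map, hYhead]
    rfl
  · rw [List.getLast?_append_of_ne_nil _ (by simpa using hYne), List.getLast?_map,
      List.getLast?_reverse, hYhead, hT'.root_eq]
    simp [insertNone_eq_insert]
  · refine (List.isChain_map _ |>.2 (hY.imp fun _ _ h => hT'.pebStep_map_some h)).append
      (List.isChain_map _ |>.2 (hY.reverse_of_symm.imp fun _ _ h => hT'.pebStep_insertNone h)) ?_
    simpa [Y] using hT'.pebStep_pebble_none hrootP
  · refine pebSpace_le_iff.2 fun Q hQ => ?_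
    simp only [List.mem_append, List.mem_map, List.mem_reverse] at hQ
    rcases hQ with ⟨A, hA, rfl⟩ | ⟨A, hA, rfl⟩
    · have := (card_le_pebSpace (hYL.subset hA)).trans hk
      simp only [card_map]
      omega
    · have := (card_le_pebSpace (hYL.subset hA)).trans hk
      simp only [card_insertNone]
      omega

theorem exists_isVisPebbling_of_isPebbling (hT' : T'.IsRootExtension T)
    (hfix : T.parent T.root = T.root) {L' : List (Finset (Option V))} {k : ℕ}
    (hL' : IsPebbling T' L') (hk : pebSpace L' ≤ k + 1) :
    ∃ L : List (Finset V), IsVisPebbling T L ∧ pebSpace L ≤ k := by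
  obtain ⟨hhead, hlast, hchain⟩ := hL'
  rw [hT'.root_eq] at hlast
  obtain ⟨l₁, P, Q, l, rfl, hP, hstay⟩ :=
    List.exists_maximal_suffix_forall (p := (none ∈ ·)) hlast (mem_singleton_self none)
      ⟨∅, List.mem_of_mem_head? hhead, notMem_empty none⟩
  obtain ⟨-, hPQ, hQl⟩ := List.isChain_append_cons_cons.1 hchain
  have hX : (eraseNone Q :: l.map eraseNone).IsChain (PebStep T) :=
    hT'.isChain_map_eraseNone hfix hstay hQl
  have hXlast : (eraseNone Q :: l.map eraseNone).getLast? = some ∅ := by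
    rw [List.getLast?_append_of_ne_nil _ (List.cons_ne_nil _ _), List.getLast?_cons_cons] at hlast
    rw [← List.map_cons, List.getLast?_map, hlast]
    simp
  refine ⟨(eraseNone Q :: l.map eraseNone).reverse ++ l.map eraseNone, ⟨?_, ?_, ?_, ?_⟩, ?_⟩
  · rw [List.head?_reverse_append_tail, hXlast]
  · rw [List.getLast?_reverse_append_tail, hXlast]
  · exact ⟨eraseNone Q, by simp, hT'.root_mem_eraseNone hPQ hP (hstay Q (by simp))⟩
  · exact hX.reverse_append_tail
  · refine pebSpace_le_iff.2 fun A hA => ?_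
    have hAX : A ∈ (Q :: l).map eraseNone := by
      rcases List.mem_append.1 hA with h | h
      · exact List.mem_reverse.1 h
      · exact List.mem_cons_of_mem _ h
    obtain ⟨R, hR, rfl⟩ := List.mem_map.1 hAX
    have := card_le_pebSpace (List.mem_append_right l₁ (List.mem_cons_of_mem P hR))
    rw [card_eraseNone_of_mem (hstay R hR)]
    omega

end PebSys.IsRootExtension

theorem vrev_le_iff_rev_extended_le_general {V : Type} [Fintype V] [DecidableEq V]
    (T : PebSys V) (hT : IsRDTree T)
    (T' : PebSys (Option V))
    (hroot : T'.root = none)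
    (hnone : T'.parent none = none)
    (hparent : ∀ v : V,
      T'.parent (some v) = if v = T.root then none else some (T.parent v))
    (k : ℕ) :
    vrevNum T ≤ k ↔ revNum T' ≤ k + 1 := by
  have hT' : T'.IsRootExtension T := ⟨hroot, hnone, hparent⟩
  refine Nat.sInf_le_iff_sInf_le_succ (fun m => ⟨?_, ?_⟩) ?_ k
  · rintro ⟨L, hL, hm⟩
    exact hT'.exists_isPebbling_of_isVisPebbling hL hm
  · rintro ⟨L', hL', hm⟩
    exact hT'.exists_isVisPebbling_of_isPebbling hT.1 hL' hm
  · rintro ⟨L', hL', h0⟩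
    exact absurd (hL'.one_le_pebSpace.trans h0) (by omega)

/-- Let `T` be a rooted directed tree with root `r`, and let
`T'` be obtained from `T` by adding a new vertex `r'` (encoded as `none` in
`Option V`) together with the directed edge `(r, r')`, with `r'` the new root.
Then for every positive integer `k`, `vrev(T) ≤ k ↔ rev(T') ≤ k + 1`. -/
theorem vrev_le_iff_rev_extended_le {V : Type} [Fintype V] [DecidableEq V]
    (T : PebSys V) (hT : IsRDTree T)
    (T' : PebSys (Option V))
    (hroot : T'.root = none)
    (hnone : T'.parent none = none)
    (hparent : ∀ v : V,
      T'.parent (some v) = if v = T.root then none else some (T.parent v))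
    (k : ℕ) (hk : 0 < k) :
    vrevNum T ≤ k ↔ revNum T' ≤ k + 1 :=
  vrev_le_iff_rev_extended_le_general T hT T' hroot hnone hparent k
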